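/- arXiv:2111.12383 — 5 statements merged into one kernel-verified Lean document; each statement's English description precedes it below -/
import Mathlib

section
/- Let X₁ and X₂ be independent standard Gaussian random variables and set ξ = (X₁² − 1)/√2 and η = X₁·X₂. Then E[ξ η] = 0 (so the correlation coefficient of ξ and η is zero) while E[(ξ² − E ξ²)(η² − E η²)] = 4. In particular, the inequality |E f(ξ) g(η)| ≤ |ρ_{ξ,η}| (E f(ξ)²)^{1/2} (E g(η)²)^{1/2} fails for f(x) = g(x) = x² − 1. -/
/-!
Everything reduces to moments of a standard Gaussian. By independence, `E[a(X₁) b(X₂)]`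
factors as `E a(X₁) · E b(X₂)`, and Gaussian integration by parts `E X ^ (n + 2) = (n + 1) E X ^ n`
gives `E X² = 1`, `E X⁴ = 3`, `E X⁶ = 15`. Hence `E ξ = E η = E ξη = 0`, so `ρ = 0`, while
`(ξ² − 1)(η² − 1) = A(X₁) X₂² − B(X₁)` with `A(x) = (x⁶ − 2x⁴ − x²)/2` and `B(x) = (x⁴ − 2x² − 1)/2`
has expectation `4 · 1 − 0 = 4`.
-/

open MeasureTheory ProbabilityTheory Real
open scoped NNReal Nat

namespace ProbabilityTheory

lemma hasDerivAt_gaussianPDFReal (μ : ℝ) (v : ℝ≥0) (x : ℝ) :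
    HasDerivAt (gaussianPDFReal μ v) (-(x - μ) / v * gaussianPDFReal μ v x) x := by
  have h := ((((hasDerivAt_id x).sub_const μ).pow 2).neg.div_const (2 * (v : ℝ))).exp.const_mul
    (√(2 * π * v))⁻¹
  refine h.congr_deriv ?_
  simp only [gaussianPDFReal, id, Pi.pow_apply, Pi.neg_apply]
  ring

lemma integrable_gaussianReal_iff {E : Type*} [NormedAddCommGroup E] [NormedSpace ℝ E]
    {μ : ℝ} {v : ℝ≥0} {f : ℝ → E} (hv : v ≠ 0) :
    Integrable f (gaussianReal μ v) ↔ Integrable (fun x => gaussianPDFReal μ v x • f x) := by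
  rw [gaussianReal_of_var_ne_zero _ hv, integrable_withDensity_iff_integrable_smul'
    (measurable_gaussianPDF μ v) (ae_of_all _ fun _ ↦ gaussianPDF_lt_top)]
  simp only [toReal_gaussianPDF]

@[fun_prop]
lemma integrable_pow_gaussianReal (μ : ℝ) (v : ℝ≥0) (n : ℕ) :
    Integrable (fun x : ℝ => x ^ n) (gaussianReal μ v) := by
  refine ((memLp_id_gaussianReal n).integrable_norm_pow').mono' (by fun_prop) ?_
  filter_upwards with x
  simp [norm_pow]

/-- Stein's identity `E[X f(X)] = v E[f'(X)]` for `f(x) = x ^ (n + 1)`. -/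
lemma integral_pow_add_two_gaussianReal (v : ℝ≥0) (n : ℕ) :
    ∫ x, x ^ (n + 2) ∂gaussianReal 0 v = (n + 1) * v * ∫ x, x ^ n ∂gaussianReal 0 v := by
  rcases eq_or_ne v 0 with rfl | hv
  · simp
  set p := gaussianPDFReal 0 v
  have hint (k : ℕ) : Integrable (fun x => p x • x ^ k) :=
    (integrable_gaussianReal_iff hv).mp (integrable_pow_gaussianReal 0 v k)
  have hderiv (x : ℝ) : HasDerivAt (fun x => v * (p x * x ^ (n + 1)))
      ((n + 1) * v * (p x • x ^ n) - p x • x ^ (n + 2)) x := by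
    refine (((hasDerivAt_gaussianPDFReal 0 v x).mul (hasDerivAt_pow (n + 1) x)).const_mul
      (v : ℝ)).congr_deriv ?_
    simp only [smul_eq_mul, sub_zero, add_tsub_cancel_right]
    field_simp
    push_cast
    ring
  have h0 := integral_eq_zero_of_hasDerivAt_of_integrable hderiv
    (((hint n).const_mul _).sub (hint (n + 2))) ((hint (n + 1)).const_mul _)
  rw [integral_sub ((hint n).const_mul _) (hint (n + 2)), integral_const_mul] at h0
  simp only [integral_gaussianReal_eq_integral_smul hv]
  linarith

lemma integral_pow_even_gaussianReal (v : ℝ≥0) (k : ℕ) :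
    ∫ x, x ^ (2 * k) ∂gaussianReal 0 v = v ^ k * (2 * k - 1)‼ := by
  induction k with
  | zero => simp
  | succ k ih =>
    rw [mul_add_one, integral_pow_add_two_gaussianReal, ih,
      show 2 * k + 2 - 1 = 2 * k + 1 by omega, Nat.doubleFactorial_add_one]
    push_cast
    ring

lemma integral_sq_gaussianReal (v : ℝ≥0) : ∫ x, x ^ 2 ∂gaussianReal 0 v = v := by
  simpa using integral_pow_even_gaussianReal v 1

lemma integral_pow_four_gaussianReal (v : ℝ≥0) :
    ∫ x, x ^ 4 ∂gaussianReal 0 v = 3 * v ^ 2 := by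
  simpa [Nat.doubleFactorial, mul_comm] using integral_pow_even_gaussianReal v 2

lemma integral_pow_six_gaussianReal (v : ℝ≥0) :
    ∫ x, x ^ 6 ∂gaussianReal 0 v = 15 * v ^ 3 := by
  simpa [Nat.doubleFactorial, mul_comm] using integral_pow_even_gaussianReal v 3

section HasLaw

variable {Ω 𝓧 𝓨 : Type*} {mΩ : MeasurableSpace Ω} {m𝓧 : MeasurableSpace 𝓧}
  {m𝓨 : MeasurableSpace 𝓨} {P : Measure Ω} {μ : Measure 𝓧} {ν : Measure 𝓨}
  {X : Ω → 𝓧} {Y : Ω → 𝓨}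

lemma HasLaw.integral_fun_comp (hX : HasLaw X μ P) {f : 𝓧 → ℝ}
    (hf : AEStronglyMeasurable f μ) : ∫ ω, f (X ω) ∂P = ∫ x, f x ∂μ :=
  hX.integral_comp hf

lemma HasLaw.integrable_fun_comp (hX : HasLaw X μ P) {f : 𝓧 → ℝ} (hf : Integrable f μ) :
    Integrable (fun ω => f (X ω)) P :=
  (hX.map_eq ▸ hf).comp_aemeasurable hX.aemeasurable

lemma IndepFun.integral_fun_comp_mul_comp_of_hasLaw (hXY : X ⟂ᵢ[P] Y) (hX : HasLaw X μ P)
    (hY : HasLaw Y ν P) {f : 𝓧 → ℝ} {g : 𝓨 → ℝ} (hf : AEStronglyMeasurable f μ)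
    (hg : AEStronglyMeasurable g ν) :
    ∫ ω, f (X ω) * g (Y ω) ∂P = (∫ x, f x ∂μ) * ∫ y, g y ∂ν := by
  rw [hXY.integral_fun_comp_mul_comp hX.aemeasurable hY.aemeasurable (hX.map_eq ▸ hf)
    (hY.map_eq ▸ hg), hX.integral_fun_comp hf, hY.integral_fun_comp hg]

lemma IndepFun.integrable_fun_comp_mul_comp_of_hasLaw (hXY : X ⟂ᵢ[P] Y) (hX : HasLaw X μ P)
    (hY : HasLaw Y ν P) {f : 𝓧 → ℝ} {g : 𝓨 → ℝ} (hfm : Measurable f) (hgm : Measurable g)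
    (hf : Integrable f μ) (hg : Integrable g ν) :
    Integrable (fun ω => f (X ω) * g (Y ω)) P :=
  (hXY.comp hfm hgm).integrable_mul (hX.integrable_fun_comp hf) (hY.integrable_fun_comp hg)

end HasLaw

noncomputable def hermiteTwo (x : ℝ) : ℝ := (x ^ 2 - 1) / √2

lemma hermiteTwo_sq (x : ℝ) : hermiteTwo x ^ 2 = (x ^ 4 - 2 * x ^ 2 + 1) / 2 := by
  rw [hermiteTwo, div_pow, sq_sqrt zero_le_two]
  ring

lemma hermiteTwo_sq_sub_one_mul_sq (x : ℝ) :
    (hermiteTwo x ^ 2 - 1) * x ^ 2 = (x ^ 6 - 2 * x ^ 4 - x ^ 2) / 2 := by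
  rw [hermiteTwo_sq]
  ring

@[fun_prop]
lemma measurable_hermiteTwo : Measurable hermiteTwo := by
  unfold hermiteTwo; fun_prop

lemma integral_hermiteTwo_gaussianReal : ∫ x, hermiteTwo x ∂gaussianReal 0 1 = 0 := by
  simp (disch := fun_prop) only [hermiteTwo, integral_div, integral_sub, integral_sq_gaussianReal,
    integral_const]
  simp

lemma integral_hermiteTwo_sq_gaussianReal : ∫ x, hermiteTwo x ^ 2 ∂gaussianReal 0 1 = 1 := by
  simp (disch := fun_prop) only [hermiteTwo_sq, integral_div, integral_add, integral_sub,
    integral_const_mul, integral_sq_gaussianReal, integral_pow_four_gaussianReal, integral_const]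
  norm_num

lemma integral_hermiteTwo_sq_sub_one_mul_sq_gaussianReal :
    ∫ x, (hermiteTwo x ^ 2 - 1) * x ^ 2 ∂gaussianReal 0 1 = 4 := by
  simp (disch := fun_prop) only [hermiteTwo_sq_sub_one_mul_sq, integral_div, integral_sub,
    integral_const_mul, integral_sq_gaussianReal, integral_pow_four_gaussianReal,
    integral_pow_six_gaussianReal]
  norm_num

lemma integral_hermiteTwo_sq_sub_one_mul_mul_sq_sub_one {Ω : Type*} {mΩ : MeasurableSpace Ω}
    {P : Measure Ω} {X Y : Ω → ℝ} (hXY : X ⟂ᵢ[P] Y) (hX : HasLaw X (gaussianReal 0 1) P)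
    (hY : HasLaw Y (gaussianReal 0 1) P) :
    ∫ ω, (hermiteTwo (X ω) ^ 2 - 1) * ((X ω * Y ω) ^ 2 - 1) ∂P = 4 := by
  have hsplit (ω : Ω) : (hermiteTwo (X ω) ^ 2 - 1) * ((X ω * Y ω) ^ 2 - 1)
      = (hermiteTwo (X ω) ^ 2 - 1) * X ω ^ 2 * Y ω ^ 2 - (hermiteTwo (X ω) ^ 2 - 1) := by
    ring
  have hA : Integrable (fun x => (hermiteTwo x ^ 2 - 1) * x ^ 2) (gaussianReal 0 1) := by
    simp_rw [hermiteTwo_sq_sub_one_mul_sq]; fun_prop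
  have hB : Integrable (fun x => hermiteTwo x ^ 2) (gaussianReal 0 1) := by
    simp_rw [hermiteTwo_sq]; fun_prop
  have hB' : Integrable (fun x => hermiteTwo x ^ 2 - 1) (gaussianReal 0 1) := by fun_prop
  simp_rw [hsplit]
  rw [integral_sub (hXY.integrable_fun_comp_mul_comp_of_hasLaw hX hY (by fun_prop) (by fun_prop)
      hA (integrable_pow_gaussianReal 0 1 2)) (hX.integrable_fun_comp hB'),
    hXY.integral_fun_comp_mul_comp_of_hasLaw (f := fun x => (hermiteTwo x ^ 2 - 1) * x ^ 2)
      (g := fun y => y ^ 2) hX hY (by fun_prop) (by fun_prop),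
    hX.integral_fun_comp (f := fun x => hermiteTwo x ^ 2 - 1) (by fun_prop),
    integral_sub hB (integrable_const 1), integral_hermiteTwo_sq_sub_one_mul_sq_gaussianReal,
    integral_hermiteTwo_sq_gaussianReal, integral_sq_gaussianReal]
  simp

end ProbabilityTheory

theorem gebelein_fails_in_second_chaos_general
    {Ω : Type*} [MeasurableSpace Ω] (P : Measure Ω)
    (X₁ X₂ : Ω → ℝ) (h1 : Measurable X₁) (h2 : Measurable X₂)
    (hind : IndepFun X₁ X₂ P)
    (hl1 : P.map X₁ = gaussianReal 0 1) (hl2 : P.map X₂ = gaussianReal 0 1)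
    (ξ η : Ω → ℝ)
    (hξ : ξ = fun ω => (X₁ ω ^ 2 - 1) / Real.sqrt 2)
    (hη : η = fun ω => X₁ ω * X₂ ω)
    (f g : ℝ → ℝ) (hf : f = fun x => x ^ 2 - 1) (hg : g = fun x => x ^ 2 - 1)
    (ρ : ℝ)
    (hρ : ρ = (∫ ω, (ξ ω - ∫ ω', ξ ω' ∂P) * (η ω - ∫ ω', η ω' ∂P) ∂P) /
      (Real.sqrt (∫ ω, (ξ ω - ∫ ω', ξ ω' ∂P) ^ 2 ∂P) *
        Real.sqrt (∫ ω, (η ω - ∫ ω', η ω' ∂P) ^ 2 ∂P))) :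
    (∫ ω, ξ ω * η ω ∂P = 0) ∧
      (∫ ω, (ξ ω ^ 2 - ∫ ω', ξ ω' ^ 2 ∂P) * (η ω ^ 2 - ∫ ω', η ω' ^ 2 ∂P) ∂P = 4) ∧
      ¬ (|∫ ω, f (ξ ω) * g (η ω) ∂P| ≤
          |ρ| * Real.sqrt (∫ ω, (f (ξ ω)) ^ 2 ∂P) * Real.sqrt (∫ ω, (g (η ω)) ^ 2 ∂P)) := by
  change ξ = fun ω => hermiteTwo (X₁ ω) at hξ
  subst hξ hη hf hg
  have hX₁ : HasLaw X₁ (gaussianReal 0 1) P := ⟨h1.aemeasurable, hl1⟩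
  have hX₂ : HasLaw X₂ (gaussianReal 0 1) P := ⟨h2.aemeasurable, hl2⟩
  have hEξ : ∫ ω, hermiteTwo (X₁ ω) ∂P = 0 :=
    (hX₁.integral_fun_comp (by fun_prop)).trans integral_hermiteTwo_gaussianReal
  have hEη : ∫ ω, X₁ ω * X₂ ω ∂P = 0 := by
    simpa [integral_id_gaussianReal] using hind.integral_fun_comp_mul_comp_of_hasLaw
      (f := fun x => x) (g := fun y => y) hX₁ hX₂ (by fun_prop) (by fun_prop)
  have hEξη : ∫ ω, hermiteTwo (X₁ ω) * (X₁ ω * X₂ ω) ∂P = 0 := by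
    simpa [mul_assoc, integral_id_gaussianReal] using hind.integral_fun_comp_mul_comp_of_hasLaw
      (f := fun x => hermiteTwo x * x) (g := fun y => y) hX₁ hX₂ (by fun_prop) (by fun_prop)
  have hEξ2 : ∫ ω, hermiteTwo (X₁ ω) ^ 2 ∂P = 1 :=
    (hX₁.integral_fun_comp (by fun_prop)).trans integral_hermiteTwo_sq_gaussianReal
  have hEη2 : ∫ ω, (X₁ ω * X₂ ω) ^ 2 ∂P = 1 := by
    simp_rw [mul_pow]
    refine (hind.integral_fun_comp_mul_comp_of_hasLaw (f := fun x => x ^ 2) (g := fun y => y ^ 2)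
      hX₁ hX₂ (by fun_prop) (by fun_prop)).trans ?_
    simp [integral_sq_gaussianReal]
  have hcross : ∫ ω, (hermiteTwo (X₁ ω) ^ 2 - 1) * ((X₁ ω * X₂ ω) ^ 2 - 1) ∂P = 4 :=
    integral_hermiteTwo_sq_sub_one_mul_mul_sq_sub_one hind hX₁ hX₂
  refine ⟨hEξη, by rw [hEξ2, hEη2]; exact hcross, ?_⟩
  have hρ0 : ρ = 0 := by rw [hρ, hEξ, hEη]; simp [hEξη]
  simp only [hρ0, hcross, abs_zero, zero_mul]
  norm_num

/-- For independent standard Gaussians `X₁, X₂`, with `ξ = (X₁² − 1)/√2` and `η = X₁·X₂`,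
one has `E[ξη] = 0` while `E[(ξ² − Eξ²)(η² − Eη²)] = 4`; in particular Gebelein's
inequality fails for `f(x) = g(x) = x² − 1`, where the correlation coefficient
`ρ_{ξ,η} = E[(ξ−Eξ)(η−Eη)] / ((E(ξ−Eξ)²)^{1/2} (E(η−Eη)²)^{1/2})`. -/
theorem gebelein_fails_in_second_chaos
    {Ω : Type*} [MeasurableSpace Ω] (P : Measure Ω) [IsProbabilityMeasure P]
    (X₁ X₂ : Ω → ℝ) (h1 : Measurable X₁) (h2 : Measurable X₂)
    (hind : IndepFun X₁ X₂ P)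
    (hl1 : P.map X₁ = gaussianReal 0 1) (hl2 : P.map X₂ = gaussianReal 0 1)
    (ξ η : Ω → ℝ)
    (hξ : ξ = fun ω => (X₁ ω ^ 2 - 1) / Real.sqrt 2)
    (hη : η = fun ω => X₁ ω * X₂ ω)
    (f g : ℝ → ℝ) (hf : f = fun x => x ^ 2 - 1) (hg : g = fun x => x ^ 2 - 1)
    (ρ : ℝ)
    (hρ : ρ = (∫ ω, (ξ ω - ∫ ω', ξ ω' ∂P) * (η ω - ∫ ω', η ω' ∂P) ∂P) /
      (Real.sqrt (∫ ω, (ξ ω - ∫ ω', ξ ω' ∂P) ^ 2 ∂P) *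
        Real.sqrt (∫ ω, (η ω - ∫ ω', η ω' ∂P) ^ 2 ∂P))) :
    (∫ ω, ξ ω * η ω ∂P = 0) ∧
      (∫ ω, (ξ ω ^ 2 - ∫ ω', ξ ω' ^ 2 ∂P) * (η ω ^ 2 - ∫ ω', η ω' ^ 2 ∂P) ∂P = 4) ∧
      ¬ (|∫ ω, f (ξ ω) * g (η ω) ∂P| ≤
          |ρ| * Real.sqrt (∫ ω, (f (ξ ω)) ^ 2 ∂P) * Real.sqrt (∫ ω, (g (η ω)) ^ 2 ∂P)) :=
  gebelein_fails_in_second_chaos_general P X₁ X₂ h1 h2 hind hl1 hl2 ξ η hξ hη f g hf hg ρ hρ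
end

section
/- Let j, p, q be positive natural numbers and let f, f' ∈ L²(ℝ^j × ℝ^p) and g, g' ∈ L²(ℝ^j × ℝ^q) with respect to Lebesgue measure. Define F(z, z') = ∫_{ℝ^p} f(z, x) f'(z', x) dx and G(z, z') = ∫_{ℝ^q} g(z, y) g'(z', y) dy for (z, z') ∈ ℝ^j × ℝ^j (defined almost everywhere). Then the function (x, y) ↦ (f ⊗_j g)(x, y) · (f' ⊗_j g')(x, y) is integrable on ℝ^p × ℝ^q and |∫_{ℝ^p × ℝ^q} (f ⊗_j g)(x, y)(f' ⊗_j g')(x, y) dx dy| ≤ ‖F‖_{L²(ℝ^j × ℝ^j)} · ‖G‖_{L²(ℝ^j × ℝ^j)}. -/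
/-! Both sides of the Fubini identity `∫∫ (f ⊗ g)(f' ⊗ g') dx dy = ∫∫ F G dz dz'` are
integrals of `f(z,x) f'(z',x) g(z,y) g'(z',y)`, and the bound is then Cauchy–Schwarz in
`L²(ℝ^j × ℝ^j)`. Cauchy–Schwarz in `x` gives `F(z,z')² ≤ ‖f(z,·)‖² ‖f'(z',·)‖²`, so `F ∈ L²`;
the same bound for `|f|, |f'|, |g|, |g'|` makes the fourfold integrand absolutely integrable,
which justifies Fubini. -/

open MeasureTheory

section CauchySchwarz

variable {α : Type*} [MeasurableSpace α] {μ : Measure α} {u v : α → ℝ}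

theorem abs_integral_mul_le_sqrt_mul_sqrt (hu : MemLp u 2 μ) (hv : MemLp v 2 μ) :
    |∫ a, u a * v a ∂μ| ≤ √(∫ a, u a ^ 2 ∂μ) * √(∫ a, v a ^ 2 ∂μ) := by
  have hHolder := integral_mul_norm_le_Lp_mul_Lq Real.HolderConjugate.two_two
    (by simpa using hu) (by simpa using hv)
  simp only [Real.norm_eq_abs, Real.rpow_two, sq_abs, ← Real.sqrt_eq_rpow] at hHolder
  calc |∫ a, u a * v a ∂μ| ≤ ∫ a, |u a * v a| ∂μ := abs_integral_le_integral_abs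
    _ = ∫ a, |u a| * |v a| ∂μ := by simp_rw [abs_mul]
    _ ≤ _ := hHolder

theorem sq_integral_mul_le_integral_sq_mul_integral_sq (hu : MemLp u 2 μ) (hv : MemLp v 2 μ) :
    (∫ a, u a * v a ∂μ) ^ 2 ≤ (∫ a, u a ^ 2 ∂μ) * ∫ a, v a ^ 2 ∂μ := by
  have hcs := pow_le_pow_left₀ (abs_nonneg _) (abs_integral_mul_le_sqrt_mul_sqrt hu hv) 2
  rwa [sq_abs, mul_pow, Real.sq_sqrt (integral_nonneg fun _ => sq_nonneg _),
    Real.sq_sqrt (integral_nonneg fun _ => sq_nonneg _)] at hcs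

end CauchySchwarz

section Contraction

variable {Z Z' X Y : Type*} [MeasurableSpace Z] [MeasurableSpace Z'] [MeasurableSpace X]
  [MeasurableSpace Y] {μ : Measure Z} {μ' : Measure Z'} {ν : Measure X} {ξ : Measure Y}

theorem MeasureTheory.MemLp.ae_memLp_prodMk_left [SFinite μ] [SFinite ν] {u : Z × X → ℝ}
    (hu : MemLp u 2 (μ.prod ν)) : ∀ᵐ z ∂μ, MemLp (fun x => u (z, x)) 2 ν := by
  filter_upwards [hu.1.prodMk_left, hu.integrable_sq.prod_right_ae] with z hmeas hsq
  exact (memLp_two_iff_integrable_sq hmeas).2 hsq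

noncomputable def contraction (ν : Measure X) (u : Z × X → ℝ) (v : Z' × X → ℝ) (w : Z × Z') :
    ℝ :=
  ∫ x, u (w.1, x) * v (w.2, x) ∂ν

variable [SFinite μ] [SFinite μ'] [SFinite ν] [SFinite ξ]

open Measure

theorem memLp_contraction {u : Z × X → ℝ} {v : Z' × X → ℝ} (hu : MemLp u 2 (μ.prod ν))
    (hv : MemLp v 2 (μ'.prod ν)) : MemLp (contraction ν u v) 2 (μ.prod μ') := by
  have hmeas : AEStronglyMeasurable (contraction ν u v) (μ.prod μ') :=
    ((hu.1.comp_quasiMeasurePreserving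
        (QuasiMeasurePreserving.prodMap quasiMeasurePreserving_fst (.id ν))).mul
      (hv.1.comp_quasiMeasurePreserving
        (QuasiMeasurePreserving.prodMap quasiMeasurePreserving_snd (.id ν)))).integral_prod_right'
  have hdom : Integrable (fun w : Z × Z' => (∫ x, u (w.1, x) ^ 2 ∂ν) * ∫ x, v (w.2, x) ^ 2 ∂ν)
      (μ.prod μ') :=
    hu.integrable_sq.integral_prod_left.mul_prod hv.integrable_sq.integral_prod_left
  refine (memLp_two_iff_integrable_sq hmeas).2 (hdom.mono' (hmeas.pow 2) ?_)
  filter_upwards [quasiMeasurePreserving_fst.ae hu.ae_memLp_prodMk_left,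
    quasiMeasurePreserving_snd.ae hv.ae_memLp_prodMk_left] with w huw hvw
  rw [Real.norm_of_nonneg (sq_nonneg _)]
  exact sq_integral_mul_le_integral_sq_mul_integral_sq huw hvw

noncomputable def contractionIntegrand (f : Z × X → ℝ) (f' : Z' × X → ℝ) (g : Z × Y → ℝ)
    (g' : Z' × Y → ℝ) (w : (Z × Z') × (X × Y)) : ℝ :=
  f (w.1.1, w.2.1) * f' (w.1.2, w.2.1) * (g (w.1.1, w.2.2) * g' (w.1.2, w.2.2))

variable {f : Z × X → ℝ} {f' : Z' × X → ℝ} {g : Z × Y → ℝ} {g' : Z' × Y → ℝ}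

theorem integrable_contractionIntegrand (hf : MemLp f 2 (μ.prod ν)) (hf' : MemLp f' 2 (μ'.prod ν))
    (hg : MemLp g 2 (μ.prod ξ)) (hg' : MemLp g' 2 (μ'.prod ξ)) :
    Integrable (contractionIntegrand f f' g g') ((μ.prod μ').prod (ν.prod ξ)) := by
  have hmeas : AEStronglyMeasurable (contractionIntegrand f f' g g')
      ((μ.prod μ').prod (ν.prod ξ)) :=
    ((hf.1.comp_quasiMeasurePreserving
        (QuasiMeasurePreserving.prodMap quasiMeasurePreserving_fst quasiMeasurePreserving_fst)).mul
      (hf'.1.comp_quasiMeasurePreserving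
        (QuasiMeasurePreserving.prodMap quasiMeasurePreserving_snd quasiMeasurePreserving_fst))).mul
    ((hg.1.comp_quasiMeasurePreserving
        (QuasiMeasurePreserving.prodMap quasiMeasurePreserving_fst quasiMeasurePreserving_snd)).mul
      (hg'.1.comp_quasiMeasurePreserving
        (QuasiMeasurePreserving.prodMap quasiMeasurePreserving_snd quasiMeasurePreserving_snd)))
  refine (integrable_prod_iff hmeas).2 ⟨?_, ?_⟩
  · filter_upwards [quasiMeasurePreserving_fst.ae hf.ae_memLp_prodMk_left,
      quasiMeasurePreserving_snd.ae hf'.ae_memLp_prodMk_left,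
      quasiMeasurePreserving_fst.ae hg.ae_memLp_prodMk_left,
      quasiMeasurePreserving_snd.ae hg'.ae_memLp_prodMk_left] with w hfw hf'w hgw hg'w
    exact (hfw.integrable_mul hf'w).mul_prod (hgw.integrable_mul hg'w)
  · refine ((memLp_contraction hf.norm hf'.norm).integrable_mul
      (memLp_contraction hg.norm hg'.norm)).congr (.of_forall fun w => ?_)
    simp only [contractionIntegrand, norm_mul]
    exact (integral_prod_mul _ _).symm

theorem integral_mul_contractions_eq (hf : MemLp f 2 (μ.prod ν)) (hf' : MemLp f' 2 (μ'.prod ν))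
    (hg : MemLp g 2 (μ.prod ξ)) (hg' : MemLp g' 2 (μ'.prod ξ)) :
    Integrable (fun xy : X × Y =>
      (∫ z, f (z, xy.1) * g (z, xy.2) ∂μ) * ∫ z', f' (z', xy.1) * g' (z', xy.2) ∂μ')
      (ν.prod ξ) ∧
    ∫ xy, (∫ z, f (z, xy.1) * g (z, xy.2) ∂μ) * (∫ z', f' (z', xy.1) * g' (z', xy.2) ∂μ')
      ∂(ν.prod ξ) = ∫ w, contraction ν f f' w * contraction ξ g g' w ∂(μ.prod μ') := by
  have hH := integrable_contractionIntegrand hf hf' hg hg'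
  have hXY (xy : X × Y) : (∫ z, f (z, xy.1) * g (z, xy.2) ∂μ) *
      (∫ z', f' (z', xy.1) * g' (z', xy.2) ∂μ') =
        ∫ w, contractionIntegrand f f' g g' (w, xy) ∂(μ.prod μ') := by
    rw [← integral_prod_mul]
    congr 1 with w
    simp only [contractionIntegrand]
    ring
  have hZZ (w : Z × Z') : ∫ xy, contractionIntegrand f f' g g' (w, xy) ∂(ν.prod ξ) =
      contraction ν f f' w * contraction ξ g g' w :=
    integral_prod_mul (fun x => f (w.1, x) * f' (w.2, x)) (fun y => g (w.1, y) * g' (w.2, y))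
  simp_rw [hXY, ← hZZ]
  exact ⟨hH.integral_prod_right, by rw [← integral_prod_symm _ hH, integral_prod _ hH]⟩

end Contraction

theorem contraction_inner_product_bound_general
    (j p q : ℕ)
    (f f' : (Fin j → ℝ) × (Fin p → ℝ) → ℝ) (g g' : (Fin j → ℝ) × (Fin q → ℝ) → ℝ)
    (hf : MemLp f 2 volume) (hf' : MemLp f' 2 volume)
    (hg : MemLp g 2 volume) (hg' : MemLp g' 2 volume)
    (F G : (Fin j → ℝ) × (Fin j → ℝ) → ℝ)
    (hF : F = fun zz => ∫ x : Fin p → ℝ, f (zz.1, x) * f' (zz.2, x))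
    (hG : G = fun zz => ∫ y : Fin q → ℝ, g (zz.1, y) * g' (zz.2, y)) :
    Integrable (fun xy : (Fin p → ℝ) × (Fin q → ℝ) =>
      (∫ z : Fin j → ℝ, f (z, xy.1) * g (z, xy.2)) *
        (∫ z : Fin j → ℝ, f' (z, xy.1) * g' (z, xy.2))) volume ∧
    |∫ xy : (Fin p → ℝ) × (Fin q → ℝ),
        (∫ z : Fin j → ℝ, f (z, xy.1) * g (z, xy.2)) *
          (∫ z : Fin j → ℝ, f' (z, xy.1) * g' (z, xy.2))| ≤
      Real.sqrt (∫ zz : (Fin j → ℝ) × (Fin j → ℝ), (F zz) ^ 2) *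
        Real.sqrt (∫ zz : (Fin j → ℝ) × (Fin j → ℝ), (G zz) ^ 2) := by
  subst hF hG
  obtain ⟨hint, heq⟩ := integral_mul_contractions_eq hf hf' hg hg'
  refine ⟨hint, ?_⟩
  calc _ = |∫ w, contraction volume f f' w * contraction volume g g' w| := congrArg abs heq
    _ ≤ _ := abs_integral_mul_le_sqrt_mul_sqrt (memLp_contraction hf hf')
      (memLp_contraction hg hg')

/-- For `f, f' ∈ L²(ℝ^j × ℝ^p)` and `g, g' ∈ L²(ℝ^j × ℝ^q)`, with
`F(z,z') = ∫ f(z,x) f'(z',x) dx` and `G(z,z') = ∫ g(z,y) g'(z',y) dy`, the product of the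
contractions `(f ⊗_j g)·(f' ⊗_j g')` is integrable over `ℝ^p × ℝ^q` and
`|∫ (f ⊗_j g)(f' ⊗_j g')| ≤ ‖F‖_{L²} ‖G‖_{L²}`. -/
theorem contraction_inner_product_bound
    (j p q : ℕ) (hj : 0 < j) (hp : 0 < p) (hq : 0 < q)
    (f f' : (Fin j → ℝ) × (Fin p → ℝ) → ℝ) (g g' : (Fin j → ℝ) × (Fin q → ℝ) → ℝ)
    (hf : MemLp f 2 volume) (hf' : MemLp f' 2 volume)
    (hg : MemLp g 2 volume) (hg' : MemLp g' 2 volume)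
    (F G : (Fin j → ℝ) × (Fin j → ℝ) → ℝ)
    (hF : F = fun zz => ∫ x : Fin p → ℝ, f (zz.1, x) * f' (zz.2, x))
    (hG : G = fun zz => ∫ y : Fin q → ℝ, g (zz.1, y) * g' (zz.2, y)) :
    Integrable (fun xy : (Fin p → ℝ) × (Fin q → ℝ) =>
      (∫ z : Fin j → ℝ, f (z, xy.1) * g (z, xy.2)) *
        (∫ z : Fin j → ℝ, f' (z, xy.1) * g' (z, xy.2))) volume ∧
    |∫ xy : (Fin p → ℝ) × (Fin q → ℝ),
        (∫ z : Fin j → ℝ, f (z, xy.1) * g (z, xy.2)) *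
          (∫ z : Fin j → ℝ, f' (z, xy.1) * g' (z, xy.2))| ≤
      Real.sqrt (∫ zz : (Fin j → ℝ) × (Fin j → ℝ), (F zz) ^ 2) *
        Real.sqrt (∫ zz : (Fin j → ℝ) × (Fin j → ℝ), (G zz) ^ 2) :=
  contraction_inner_product_bound_general j p q f f' g g' hf hf' hg hg' F G hF hG
end

section
/- Let d₁, d₂ be positive integers, I₁ = {1, …, d₁}, I₂ = {d₁+1, …, d₁+d₂}, and let k be a natural number with k ≤ min(d₁, d₂). Let V = {{m₁, n₁}, …, {m_k, n_k}} be a set of k pairwise disjoint two-element subsets of {1, …, d₁+d₂} with m_i ∈ I₁ and n_i ∈ I₂ for each i. Then the number of pairs (π, σ), where π is a permutation of I₁ and σ is a permutation of I₂, such that {{π(i), σ(d₁+i)} : i = 1, …, k} = V, equals k! · (d₁ − k)! · (d₂ − k)!. -/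
open Finset

/-- Number of permutations of `Fin d` extending a given injection `Fin k ↪ Fin d`
(on the first `k` points) is `(d-k)!`. -/
lemma cardA {d k : ℕ} (h : k ≤ d) (g : Fin k → Fin d) (hg : Function.Injective g) :
    Fintype.card {π : Equiv.Perm (Fin d) // ∀ i : Fin k, π (Fin.castLE h i) = g i}
      = (d - k).factorial := by
  classical
  -- equiv between first-k subtype and Fin k
  let e₁ : {a : Fin d // a.val < k} ≃ Fin k :=
    { toFun := fun a => ⟨a.1.1, a.2⟩
      invFun := fun i => ⟨Fin.castLE h i, i.2⟩
      left_inv := fun a => by ext; rfl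
      right_inv := fun i => by ext; rfl }
  let e₂ : Fin k ≃ {a : Fin d // a ∈ Set.range g} := Equiv.ofInjective g hg
  let π₀ : Equiv.Perm (Fin d) := (e₁.trans e₂).extendSubtype
  have hπ₀ : ∀ i : Fin k, π₀ (Fin.castLE h i) = g i := by
    intro i
    have : (Fin.castLE h i).val < k := i.2
    show (e₁.trans e₂).extendSubtype (Fin.castLE h i) = g i
    rw [Equiv.extendSubtype_apply_of_mem (e₁.trans e₂) (Fin.castLE h i) this]
    have h1 : e₁ ⟨Fin.castLE h i, this⟩ = i := by ext; rfl
    simp [Equiv.trans_apply, h1, e₂]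
  -- translate by π₀
  have E1 : {π : Equiv.Perm (Fin d) // ∀ i : Fin k, π (Fin.castLE h i) = g i} ≃
      {ρ : Equiv.Perm (Fin d) // ∀ i : Fin k, ρ (Fin.castLE h i) = Fin.castLE h i} :=
    { toFun := fun π => ⟨π₀⁻¹ * π.1, fun i => by
        simp [Equiv.Perm.mul_apply, π.2 i, ← hπ₀ i]⟩
      invFun := fun ρ => ⟨π₀ * ρ.1, fun i => by
        simp [Equiv.Perm.mul_apply, ρ.2 i, hπ₀ i]⟩
      left_inv := fun π => by ext : 1; simp [mul_assoc]
      right_inv := fun ρ => by ext : 1; simp [← mul_assoc] }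
  have E2 : {ρ : Equiv.Perm (Fin d) // ∀ i : Fin k, ρ (Fin.castLE h i) = Fin.castLE h i} ≃
      {ρ : Equiv.Perm (Fin d) // ∀ a : Fin d, ¬ (k ≤ a.val) → ρ a = a} := by
    apply Equiv.subtypeEquivRight
    intro ρ
    constructor
    · intro hρ a ha
      have ha' : a.val < k := by omega
      have : a = Fin.castLE h ⟨a.val, ha'⟩ := by ext; rfl
      rw [this, hρ]
    · intro hρ i
      exact hρ _ (by simpa using i.2)
  have E3 := (Equiv.Perm.subtypeEquivSubtypePerm (fun a : Fin d => k ≤ a.val))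
  have hcard : Fintype.card {a : Fin d // k ≤ a.val} = d - k := by
    have : Fintype.card {a : Fin d // k ≤ a.val}
        = Fintype.card {a : Fin d // ¬ a.val < k} :=
      Fintype.card_congr (Equiv.subtypeEquivRight (fun a => by omega))
    rw [this, Fintype.card_subtype_compl]
    have : Fintype.card {a : Fin d // a.val < k} = k := by
      rw [Fintype.card_congr e₁, Fintype.card_fin]
    rw [this, Fintype.card_fin]
  calc Fintype.card {π : Equiv.Perm (Fin d) // ∀ i : Fin k, π (Fin.castLE h i) = g i}
      = Fintype.card (Equiv.Perm {a : Fin d // k ≤ a.val}) :=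
        Fintype.card_congr (E1.trans (E2.trans E3.symm))
    _ = (d - k).factorial := by rw [Fintype.card_perm, hcard]


/-- The number of functions `Fin k → β` with image a fixed `k`-element finset `V` is `k!`. -/
lemma cardB {β : Type*} [DecidableEq β] [Fintype β] {k : ℕ} (V : Finset β) (hV : V.card = k) :
    Fintype.card {f : Fin k → β // Finset.image f Finset.univ = V} = k.factorial := by
  classical
  have E : {f : Fin k → β // Finset.image f Finset.univ = V} ≃ (Fin k ≃ {x // x ∈ V}) := by
    refine
      { toFun := fun f => Equiv.ofBijective
          (fun i => (⟨f.1 i, by have h := mem_image_of_mem f.1 (mem_univ i); rwa [f.2] at h⟩ :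
            {x // x ∈ V})) ?_
        invFun := fun e => ⟨fun i => (e i).1, ?_⟩
        left_inv := fun f => ?_
        right_inv := fun e => ?_ }
    · obtain ⟨f, hf⟩ := f
      have hinj : Function.Injective f := by
        have hc : (Finset.image f Finset.univ).card = (Finset.univ : Finset (Fin k)).card := by
          rw [hf, hV]; simp
        have := Finset.injOn_of_card_image_eq hc
        intro a b hab
        exact this (by simp) (by simp) hab
      rw [Fintype.bijective_iff_injective_and_card]
      constructor
      · intro a b hab
        exact hinj (congrArg Subtype.val hab)
      · simp [hV]
    · ext x
      simp only [Finset.mem_image, Finset.mem_univ, true_and]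
      constructor
      · rintro ⟨i, rfl⟩; exact (e i).2
      · intro hx; exact ⟨e.symm ⟨x, hx⟩, by simp⟩
    · apply Subtype.ext; funext i; rfl
    · ext i; rfl
  rw [Fintype.card_congr E]
  have e0 : Fin k ≃ {x // x ∈ V} :=
    (Fintype.equivFinOfCardEq (by simp [hV]) : {x // x ∈ V} ≃ Fin k).symm
  rw [Fintype.card_equiv e0, Fintype.card_fin]


/-- With `I₁ = {1, …, d₁}` and `I₂ = {d₁+1, …, d₁+d₂}` (modelled as `Fin d₁` and `Fin d₂`),
and `V` a set of `k` pairwise disjoint pairs `(mᵢ, nᵢ) ∈ I₁ × I₂`, the number of pairs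
`(π, σ)` of permutations of `I₁` and `I₂` such that `{(π(i), σ(i)) : i = 1, …, k} = V`
equals `k! (d₁ − k)! (d₂ − k)!`. -/
theorem card_permutation_pairs_matching_pairing
    (d₁ d₂ : ℕ) (hd₁ : 0 < d₁) (hd₂ : 0 < d₂)
    (k : ℕ) (hk₁ : k ≤ d₁) (hk₂ : k ≤ d₂)
    (V : Finset (Fin d₁ × Fin d₂)) (hV : V.card = k)
    (hinj1 : ∀ a ∈ V, ∀ b ∈ V, a.1 = b.1 → a = b)
    (hinj2 : ∀ a ∈ V, ∀ b ∈ V, a.2 = b.2 → a = b) :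
    Set.ncard {πσ : Equiv.Perm (Fin d₁) × Equiv.Perm (Fin d₂) |
        Finset.image (fun i : Fin k =>
          (πσ.1 (Fin.castLE hk₁ i), πσ.2 (Fin.castLE hk₂ i))) Finset.univ = V} =
      k.factorial * (d₁ - k).factorial * (d₂ - k).factorial := by
  classical
  set G := Equiv.Perm (Fin d₁) × Equiv.Perm (Fin d₂)
  set F : G → (Fin k → Fin d₁ × Fin d₂) :=
    fun πσ i => (πσ.1 (Fin.castLE hk₁ i), πσ.2 (Fin.castLE hk₂ i)) with hF
  set S : Finset G := Finset.univ.filter (fun g => Finset.image (F g) Finset.univ = V) with hS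
  set T : Finset (Fin k → Fin d₁ × Fin d₂) :=
    Finset.univ.filter (fun f => Finset.image f Finset.univ = V) with hT
  have hset : Set.ncard {πσ : G |
      Finset.image (fun i : Fin k =>
        (πσ.1 (Fin.castLE hk₁ i), πσ.2 (Fin.castLE hk₂ i))) Finset.univ = V} = S.card := by
    rw [Set.ncard_eq_toFinset_card']
    congr 1
    ext g
    simp [S, F]
  rw [hset]
  have hmaps : ∀ g ∈ S, F g ∈ T := by
    intro g hg
    simp only [T, Finset.mem_filter, Finset.mem_univ, true_and]
    exact (Finset.mem_filter.mp hg).2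
  rw [Finset.card_eq_sum_card_fiberwise hmaps]
  have hfib : ∀ f ∈ T, (S.filter (fun g => F g = f)).card
      = (d₁ - k).factorial * (d₂ - k).factorial := by
    intro f hf
    have hfV : Finset.image f Finset.univ = V := (Finset.mem_filter.mp hf).2
    have hfinj : Function.Injective f := by
      have hc : (Finset.image f Finset.univ).card = (Finset.univ : Finset (Fin k)).card := by
        rw [hfV, hV]; simp
      have := Finset.injOn_of_card_image_eq hc
      intro a b hab
      exact this (by simp) (by simp) hab
    have hmemV : ∀ i, f i ∈ V := fun i => hfV ▸ Finset.mem_image_of_mem f (Finset.mem_univ i)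
    have hg1 : Function.Injective (fun i => (f i).1) := by
      intro a b hab
      exact hfinj (hinj1 _ (hmemV a) _ (hmemV b) hab)
    have hg2 : Function.Injective (fun i => (f i).2) := by
      intro a b hab
      exact hfinj (hinj2 _ (hmemV a) _ (hmemV b) hab)
    have heq : S.filter (fun g => F g = f) = Finset.univ.filter (fun g => F g = f) := by
      ext g
      simp only [Finset.mem_filter, Finset.mem_univ, true_and, S]
      constructor
      · rintro ⟨-, h⟩; exact h
      · intro h; exact ⟨by rw [h, hfV], h⟩
    rw [heq, ← Fintype.card_subtype]
    have E : {g : G // F g = f} ≃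
        ({π : Equiv.Perm (Fin d₁) // ∀ i : Fin k, π (Fin.castLE hk₁ i) = (f i).1} ×
         {σ : Equiv.Perm (Fin d₂) // ∀ i : Fin k, σ (Fin.castLE hk₂ i) = (f i).2}) :=
      { toFun := fun g => (⟨g.1.1, fun i => congrArg Prod.fst (congrFun g.2 i)⟩,
                           ⟨g.1.2, fun i => congrArg Prod.snd (congrFun g.2 i)⟩)
        invFun := fun p => ⟨(p.1.1, p.2.1), funext fun i => Prod.ext (p.1.2 i) (p.2.2 i)⟩
        left_inv := fun g => rfl
        right_inv := fun p => rfl }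
    rw [Fintype.card_congr E, Fintype.card_prod, cardA hk₁ _ hg1, cardA hk₂ _ hg2]
  rw [Finset.sum_congr rfl hfib, Finset.sum_const, smul_eq_mul]
  have hTcard : T.card = k.factorial := by
    rw [← cardB V hV, Fintype.card_subtype]
  rw [hTcard, mul_assoc]
end

section
/- Let β₁ ∈ ℝ with β₁ ≠ 0 and β₁ < 1/2. Then there are constants 0 < c ≤ C, depending only on β₁, such that for every s > 0 the following two-sided bounds for |k_s^{β₁}(−v)| hold: (i) for v ∈ (−s, 0]: c·(s+v)^{β₁} ≤ |k_s^{β₁}(−v)| ≤ C·(s+v)^{β₁}; (ii) for v ∈ (0, s]: if β₁ > 0 then c·s^{β₁} ≤ |k_s^{β₁}(−v)| ≤ C·s^{β₁}, and if β₁ < 0 then c·v^{β₁} ≤ |k_s^{β₁}(−v)| ≤ C·v^{β₁}; (iii) for v ∈ [s, ∞): c·s·v^{β₁−1} ≤ |k_s^{β₁}(−v)| ≤ C·s·v^{β₁−1}. -/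
open Real Set


/-- The fractional kernel `k_t^{β₁}`: `k_t^0 = 1_{(0,t]}` and
`k_t^{β₁}(u) = (1/β₁)[((t−u)₊)^{β₁} − ((−u)₊)^{β₁}]` for `β₁ ≠ 0`. -/
noncomputable def fracKernel (β₁ t u : ℝ) : ℝ :=
  if β₁ = 0 then Set.indicator (Set.Ioc 0 t) (fun _ => (1 : ℝ)) u
  else (1 / β₁) * ((max (t - u) 0) ^ β₁ - (max (-u) 0) ^ β₁)

/-- Chord bound from concavity of `x ^ p` on `[1,2]`. -/
lemma chord_rpow {p t : ℝ} (hp₀ : 0 < p) (hp₁ : p ≤ 1) (ht₀ : 0 ≤ t) (ht₁ : t ≤ 1) :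
    1 + (2 ^ p - 1) * t ≤ (1 + t) ^ p := by
  have h := (Real.concaveOn_rpow hp₀.le hp₁).2 (Set.mem_Ici.2 (zero_le_one (α := ℝ)))
    (Set.mem_Ici.2 (by norm_num : (0:ℝ) ≤ 2))
    (show (0:ℝ) ≤ 1 - t by linarith) ht₀ (by ring : (1 - t) + t = 1)
  simp only [smul_eq_mul, mul_one, Real.one_rpow] at h
  have h2 : 1 - t + t * 2 = 1 + t := by ring
  rw [h2] at h
  nlinarith [h]

/-- Bernoulli inequality for nonpositive exponents on `[1, ∞)`. -/
lemma bernoulli_neg {p x : ℝ} (hp : p ≤ 0) (hx : 1 ≤ x) :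
    1 + p * (x - 1) ≤ x ^ p := by
  have hx0 : 0 < x := lt_of_lt_of_le one_pos hx
  rw [Real.rpow_def_of_pos hx0, mul_comm (Real.log x) p]
  have h1 : Real.log x ≤ x - 1 := by
    have := Real.log_le_sub_one_of_pos hx0; linarith
  have h2 : p * Real.log x + 1 ≤ Real.exp (p * Real.log x) := Real.add_one_le_exp _
  linarith [mul_le_mul_of_nonpos_left h1 hp]

/-- Sandwich transfer lemma. -/
lemma sandwich {γ c C L U T B : ℝ} (hγ : 0 < γ) (hT : 0 ≤ T)
    (hc : c * γ ≤ L) (hC : U ≤ C * γ) (hL : L * T ≤ B) (hU : B ≤ U * T) :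
    c * T ≤ 1 / γ * B ∧ 1 / γ * B ≤ C * T := by
  constructor
  · rw [one_div, inv_mul_eq_div, le_div_iff₀ hγ]
    nlinarith [mul_nonneg (sub_nonneg.2 hc) hT]
  · rw [one_div, inv_mul_eq_div, div_le_iff₀ hγ]
    nlinarith [mul_nonneg (sub_nonneg.2 hC) hT]

set_option maxHeartbeats 1000000 in
/-- Two-sided bounds for `|k_s^{β₁}(−v)|` (`β₁ ≠ 0`, `β₁ < 1/2`), uniform in `s > 0`:
`≈ (s+v)^{β₁}` for `v ∈ (−s, 0]`; `≈ s^{β₁}` (if `β₁ > 0`) resp. `≈ v^{β₁}` (if `β₁ < 0`)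
for `v ∈ (0, s]`; and `≈ s v^{β₁−1}` for `v ∈ [s, ∞)`. -/
theorem fracKernel_two_sided_bounds (β₁ : ℝ) (hβ₁ : β₁ ≠ 0) (hβ₁' : β₁ < 1 / 2) :
    ∃ c C : ℝ, 0 < c ∧ c ≤ C ∧ ∀ s : ℝ, 0 < s →
      ((∀ v : ℝ, -s < v → v ≤ 0 →
          c * (s + v) ^ β₁ ≤ |fracKernel β₁ s (-v)| ∧
            |fracKernel β₁ s (-v)| ≤ C * (s + v) ^ β₁) ∧
        (∀ v : ℝ, 0 < v → v ≤ s →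
          ((0 < β₁ →
              c * s ^ β₁ ≤ |fracKernel β₁ s (-v)| ∧ |fracKernel β₁ s (-v)| ≤ C * s ^ β₁) ∧
            (β₁ < 0 →
              c * v ^ β₁ ≤ |fracKernel β₁ s (-v)| ∧ |fracKernel β₁ s (-v)| ≤ C * v ^ β₁))) ∧
        (∀ v : ℝ, s ≤ v →
          c * s * v ^ (β₁ - 1) ≤ |fracKernel β₁ s (-v)| ∧
            |fracKernel β₁ s (-v)| ≤ C * s * v ^ (β₁ - 1))) := by
  have habs : ∀ X : ℝ, |1 / β₁ * X| = 1 / |β₁| * |X| := fun X => by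
    rw [abs_mul, abs_div, abs_one]
  rcases lt_or_gt_of_ne hβ₁ with hneg | hpos
  · -- β₁ < 0
    set γ : ℝ := -β₁ with hγdef
    have hγ : 0 < γ := by rw [hγdef]; linarith
    have hβabs : |β₁| = γ := abs_of_neg hneg
    have h2β : (2:ℝ) ^ β₁ < 1 := Real.rpow_lt_one_of_one_lt_of_neg one_lt_two hneg
    have h2βpos : (0:ℝ) < 2 ^ β₁ := Real.rpow_pos_of_pos two_pos _
    set m : ℝ := min ((2:ℝ) ^ γ - 1) 1 with hm
    have h2γ : (1:ℝ) < 2 ^ γ := (Real.one_lt_rpow_iff_of_pos two_pos).2 (Or.inl ⟨one_lt_two, hγ⟩)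
    have hmpos : 0 < m := lt_min (by linarith) one_pos
    have hm1 : m ≤ 1 := min_le_right _ _
    refine ⟨min (min (1/γ) ((1 - 2 ^ β₁)/γ)) (2 ^ β₁ * m / γ), max (1/γ) 1, ?_, ?_, ?_⟩
    · exact lt_min (lt_min (by positivity) (div_pos (by linarith) hγ))
        (div_pos (by positivity) hγ)
    · exact le_trans (min_le_of_left_le (min_le_left _ _)) (le_max_left _ _)
    intro s hs
    set c := min (min (1/γ) ((1 - 2 ^ β₁)/γ)) (2 ^ β₁ * m / γ) with hcdef
    set C := max (1/γ) 1 with hCdef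
    have hc1 : c * γ ≤ 1 := by
      have h : c ≤ 1/γ := le_trans (min_le_left _ _) (min_le_left _ _)
      rw [← le_div_iff₀ hγ]; exact h
    have hc2 : c * γ ≤ 1 - 2 ^ β₁ := by
      have h : c ≤ (1 - 2 ^ β₁)/γ := le_trans (min_le_left _ _) (min_le_right _ _)
      rw [← le_div_iff₀ hγ]; exact h
    have hc3 : c * γ ≤ 2 ^ β₁ * m := by
      have h : c ≤ 2 ^ β₁ * m / γ := min_le_right _ _
      rw [← le_div_iff₀ hγ]; exact h
    have hC1 : 1 ≤ C * γ := by
      have h : 1/γ ≤ C := le_max_left _ _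
      rw [div_le_iff₀ hγ] at h; exact h
    have hC3 : γ ≤ C * γ := by
      have h : (1:ℝ) ≤ C := le_max_right _ _
      nlinarith
    refine ⟨?_, ?_, ?_⟩
    · -- case (i): v ∈ (-s, 0]
      intro v hv1 hv2
      have hsv : (0:ℝ) < s + v := by linarith
      have hk : fracKernel β₁ s (-v) = 1/β₁ * ((s + v) ^ β₁) := by
        simp only [fracKernel, if_neg hβ₁, sub_neg_eq_add, neg_neg]
        rw [max_eq_left hsv.le, max_eq_right hv2, Real.zero_rpow hβ₁, sub_zero]
      have hEq : |fracKernel β₁ s (-v)| = 1/γ * ((s + v) ^ β₁) := by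
        rw [hk, habs, hβabs, abs_of_pos (Real.rpow_pos_of_pos hsv _)]
      rw [hEq]
      exact sandwich hγ (Real.rpow_pos_of_pos hsv _).le hc1 hC1
        (le_of_eq (one_mul _)) (le_of_eq (one_mul _).symm)
    · -- case (ii): v ∈ (0, s]
      intro v hv0 hvs
      refine ⟨fun h => absurd h (not_lt.2 hneg.le), fun _ => ?_⟩
      have hsv : (0:ℝ) < s + v := by linarith
      have hk : fracKernel β₁ s (-v) = 1/β₁ * ((s + v) ^ β₁ - v ^ β₁) := by
        simp only [fracKernel, if_neg hβ₁, sub_neg_eq_add, neg_neg]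
        rw [max_eq_left hsv.le, max_eq_left hv0.le]
      have hle : (s + v) ^ β₁ ≤ v ^ β₁ :=
        Real.rpow_le_rpow_of_nonpos hv0 (by linarith) hneg.le
      have hEq : |fracKernel β₁ s (-v)| = 1/γ * (v ^ β₁ - (s + v) ^ β₁) := by
        rw [hk, habs, hβabs, abs_of_nonpos (by linarith), neg_sub]
      have h2v : (s + v) ^ β₁ ≤ 2 ^ β₁ * v ^ β₁ := by
        have hmr : ((2:ℝ) * v) ^ β₁ = 2 ^ β₁ * v ^ β₁ :=
          Real.mul_rpow (by norm_num) hv0.le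
        have h := Real.rpow_le_rpow_of_nonpos (by linarith : (0:ℝ) < 2 * v)
          (by linarith : 2 * v ≤ s + v) hneg.le
        rw [hmr] at h; exact h
      have hB1 : (1 - 2 ^ β₁) * v ^ β₁ ≤ v ^ β₁ - (s + v) ^ β₁ := by nlinarith [h2v]
      have hB2 : v ^ β₁ - (s + v) ^ β₁ ≤ 1 * v ^ β₁ := by
        nlinarith [Real.rpow_pos_of_pos hsv β₁]
      rw [hEq]
      exact sandwich hγ (Real.rpow_pos_of_pos hv0 _).le hc2 hC1 hB1 hB2
    · -- case (iii): v ≥ s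
      intro v hvs
      have hv0 : (0:ℝ) < v := lt_of_lt_of_le hs hvs
      have hsv : (0:ℝ) < s + v := by linarith
      set t := s / v with htdef
      have ht0 : 0 < t := div_pos hs hv0
      have ht1 : t ≤ 1 := (div_le_one hv0).2 hvs
      have h1t : s + v = v * (1 + t) := by rw [htdef]; field_simp; ring
      have hsvpow : (s + v) ^ β₁ = v ^ β₁ * (1 + t) ^ β₁ := by
        rw [h1t, Real.mul_rpow hv0.le (by linarith)]
      have hT : s * v ^ (β₁ - 1) = t * v ^ β₁ := by
        rw [Real.rpow_sub hv0, Real.rpow_one, htdef]; ring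
      have hk : fracKernel β₁ s (-v) = 1/β₁ * ((s + v) ^ β₁ - v ^ β₁) := by
        simp only [fracKernel, if_neg hβ₁, sub_neg_eq_add, neg_neg]
        rw [max_eq_left hsv.le, max_eq_left hv0.le]
      have hle : (s + v) ^ β₁ ≤ v ^ β₁ :=
        Real.rpow_le_rpow_of_nonpos hv0 (by linarith) hneg.le
      have hEq : |fracKernel β₁ s (-v)| = 1/γ * (v ^ β₁ - (s + v) ^ β₁) := by
        rw [hk, habs, hβabs, abs_of_nonpos (by linarith), neg_sub]
      have h1tpos : (0:ℝ) < 1 + t := by linarith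
      have hge2 : (2:ℝ) ^ β₁ ≤ (1 + t) ^ β₁ :=
        Real.rpow_le_rpow_of_nonpos h1tpos (by linarith) hneg.le
      have hprod : (1 + t) ^ β₁ * (1 + t) ^ γ = 1 := by
        rw [← Real.rpow_add h1tpos, hγdef, add_neg_cancel, Real.rpow_zero]
      have hγchord : m * t ≤ (1 + t) ^ γ - 1 := by
        rcases le_or_gt γ 1 with h | h
        · have hch := chord_rpow hγ h ht0.le ht1
          have hm' : m ≤ 2 ^ γ - 1 := min_le_left _ _
          nlinarith
        · have hb := one_add_mul_self_le_rpow_one_add (by linarith : (-1:ℝ) ≤ t) h.le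
          nlinarith
      have key : 2 ^ β₁ * (m * t) ≤ 1 - (1 + t) ^ β₁ := by
        have h1 : 1 - (1 + t) ^ β₁ = (1 + t) ^ β₁ * ((1 + t) ^ γ - 1) := by
          rw [mul_sub, hprod, mul_one]
        rw [h1]
        have hpos' : (0:ℝ) < (1 + t) ^ β₁ := Real.rpow_pos_of_pos h1tpos _
        exact mul_le_mul hge2 hγchord (mul_nonneg hmpos.le ht0.le) hpos'.le
      have hvb : (0:ℝ) < v ^ β₁ := Real.rpow_pos_of_pos hv0 _
      have hlow : 2 ^ β₁ * m * (t * v ^ β₁) ≤ v ^ β₁ - (s + v) ^ β₁ := by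
        rw [hsvpow]
        nlinarith [mul_le_mul_of_nonneg_left key hvb.le]
      have hupp : v ^ β₁ - (s + v) ^ β₁ ≤ γ * (t * v ^ β₁) := by
        rw [hsvpow, hγdef]
        have hb := bernoulli_neg hneg.le (by linarith : (1:ℝ) ≤ 1 + t)
        have ht' : (1:ℝ) + t - 1 = t := by ring
        rw [ht'] at hb
        nlinarith [mul_le_mul_of_nonneg_left hb hvb.le]
      rw [hEq, mul_assoc, mul_assoc, hT]
      exact sandwich hγ (mul_nonneg ht0.le hvb.le) hc3 hC3 hlow hupp
  · -- 0 < β₁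
    have hβabs : |β₁| = β₁ := abs_of_pos hpos
    have h2β : (1:ℝ) < 2 ^ β₁ := (Real.one_lt_rpow_iff_of_pos two_pos).2 (Or.inl ⟨one_lt_two, hpos⟩)
    have h2n : (2:ℝ) ^ (-β₁) < 1 := Real.rpow_lt_one_of_one_lt_of_neg one_lt_two (by linarith)
    have h2npos : (0:ℝ) < 2 ^ (-β₁) := Real.rpow_pos_of_pos two_pos _
    refine ⟨min (min (1/β₁) ((1 - 2 ^ (-β₁))/β₁)) ((2 ^ β₁ - 1)/β₁), max (2 ^ β₁/β₁) 1,
      ?_, ?_, ?_⟩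
    · exact lt_min (lt_min (by positivity) (div_pos (by linarith) hpos))
        (div_pos (by linarith) hpos)
    · calc min (min (1/β₁) ((1 - 2 ^ (-β₁))/β₁)) ((2 ^ β₁ - 1)/β₁)
          ≤ 1/β₁ := le_trans (min_le_left _ _) (min_le_left _ _)
        _ ≤ 2 ^ β₁/β₁ := (div_le_div_iff_of_pos_right hpos).2 h2β.le
        _ ≤ max (2 ^ β₁/β₁) 1 := le_max_left _ _
    intro s hs
    set c := min (min (1/β₁) ((1 - 2 ^ (-β₁))/β₁)) ((2 ^ β₁ - 1)/β₁) with hcdef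
    set C := max (2 ^ β₁/β₁) 1 with hCdef
    have hc1 : c * β₁ ≤ 1 := by
      have h : c ≤ 1/β₁ := le_trans (min_le_left _ _) (min_le_left _ _)
      rw [← le_div_iff₀ hpos]; exact h
    have hc2 : c * β₁ ≤ 1 - 2 ^ (-β₁) := by
      have h : c ≤ (1 - 2 ^ (-β₁))/β₁ := le_trans (min_le_left _ _) (min_le_right _ _)
      rw [← le_div_iff₀ hpos]; exact h
    have hc3 : c * β₁ ≤ 2 ^ β₁ - 1 := by
      have h : c ≤ (2 ^ β₁ - 1)/β₁ := min_le_right _ _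
      rw [← le_div_iff₀ hpos]; exact h
    have hCa : 2 ^ β₁ ≤ C * β₁ := by
      have h : 2 ^ β₁/β₁ ≤ C := le_max_left _ _
      rw [div_le_iff₀ hpos] at h; exact h
    have hC1 : 1 ≤ C * β₁ := le_trans h2β.le hCa
    have hC3 : β₁ ≤ C * β₁ := by
      have h : (1:ℝ) ≤ C := le_max_right _ _
      nlinarith
    refine ⟨?_, ?_, ?_⟩
    · -- case (i)
      intro v hv1 hv2
      have hsv : (0:ℝ) < s + v := by linarith
      have hk : fracKernel β₁ s (-v) = 1/β₁ * ((s + v) ^ β₁) := by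
        simp only [fracKernel, if_neg hβ₁, sub_neg_eq_add, neg_neg]
        rw [max_eq_left hsv.le, max_eq_right hv2, Real.zero_rpow hβ₁, sub_zero]
      have hEq : |fracKernel β₁ s (-v)| = 1/β₁ * ((s + v) ^ β₁) := by
        rw [hk, habs, hβabs, abs_of_pos (Real.rpow_pos_of_pos hsv _)]
      rw [hEq]
      exact sandwich hpos (Real.rpow_pos_of_pos hsv _).le hc1 hC1
        (le_of_eq (one_mul _)) (le_of_eq (one_mul _).symm)
    · -- case (ii)
      intro v hv0 hvs
      refine ⟨fun _ => ?_, fun h => absurd hpos (not_lt.2 h.le)⟩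
      have hsv : (0:ℝ) < s + v := by linarith
      have hk : fracKernel β₁ s (-v) = 1/β₁ * ((s + v) ^ β₁ - v ^ β₁) := by
        simp only [fracKernel, if_neg hβ₁, sub_neg_eq_add, neg_neg]
        rw [max_eq_left hsv.le, max_eq_left hv0.le]
      have hle : v ^ β₁ ≤ (s + v) ^ β₁ :=
        Real.rpow_le_rpow hv0.le (by linarith) hpos.le
      have hEq : |fracKernel β₁ s (-v)| = 1/β₁ * ((s + v) ^ β₁ - v ^ β₁) := by
        rw [hk, habs, hβabs, abs_of_nonneg (by linarith)]
      have hv2 : v ^ β₁ ≤ ((s + v)/2) ^ β₁ :=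
        Real.rpow_le_rpow hv0.le (by linarith) hpos.le
      have hhalf : ((s + v)/2) ^ β₁ = (s + v) ^ β₁ * 2 ^ (-β₁) := by
        rw [Real.div_rpow hsv.le (by norm_num), Real.rpow_neg (by norm_num), div_eq_mul_inv]
      rw [hhalf] at hv2
      have hss : s ^ β₁ ≤ (s + v) ^ β₁ := Real.rpow_le_rpow hs.le (by linarith) hpos.le
      have hB1 : (1 - 2 ^ (-β₁)) * s ^ β₁ ≤ (s + v) ^ β₁ - v ^ β₁ := by
        nlinarith [mul_le_mul_of_nonneg_right hss (by linarith : (0:ℝ) ≤ 1 - 2 ^ (-β₁))]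
      have hB2 : (s + v) ^ β₁ - v ^ β₁ ≤ 2 ^ β₁ * s ^ β₁ := by
        have h2s : (s + v) ^ β₁ ≤ 2 ^ β₁ * s ^ β₁ := by
          have hmr : ((2:ℝ) * s) ^ β₁ = 2 ^ β₁ * s ^ β₁ := Real.mul_rpow (by norm_num) hs.le
          have h := Real.rpow_le_rpow hsv.le (by linarith : s + v ≤ 2 * s) hpos.le
          rw [hmr] at h; exact h
        nlinarith [Real.rpow_pos_of_pos hv0 β₁]
      rw [hEq]
      exact sandwich hpos (Real.rpow_pos_of_pos hs _).le hc2 hCa hB1 hB2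
    · -- case (iii)
      intro v hvs
      have hv0 : (0:ℝ) < v := lt_of_lt_of_le hs hvs
      have hsv : (0:ℝ) < s + v := by linarith
      set t := s / v with htdef
      have ht0 : 0 < t := div_pos hs hv0
      have ht1 : t ≤ 1 := (div_le_one hv0).2 hvs
      have h1t : s + v = v * (1 + t) := by rw [htdef]; field_simp; ring
      have hsvpow : (s + v) ^ β₁ = v ^ β₁ * (1 + t) ^ β₁ := by
        rw [h1t, Real.mul_rpow hv0.le (by linarith)]
      have hT : s * v ^ (β₁ - 1) = t * v ^ β₁ := by
        rw [Real.rpow_sub hv0, Real.rpow_one, htdef]; ring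
      have hk : fracKernel β₁ s (-v) = 1/β₁ * ((s + v) ^ β₁ - v ^ β₁) := by
        simp only [fracKernel, if_neg hβ₁, sub_neg_eq_add, neg_neg]
        rw [max_eq_left hsv.le, max_eq_left hv0.le]
      have hle : v ^ β₁ ≤ (s + v) ^ β₁ :=
        Real.rpow_le_rpow hv0.le (by linarith) hpos.le
      have hEq : |fracKernel β₁ s (-v)| = 1/β₁ * ((s + v) ^ β₁ - v ^ β₁) := by
        rw [hk, habs, hβabs, abs_of_nonneg (by linarith)]
      have hvb : (0:ℝ) < v ^ β₁ := Real.rpow_pos_of_pos hv0 _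
      have hch := chord_rpow hpos (by linarith : β₁ ≤ 1) ht0.le ht1
      have hbern := rpow_one_add_le_one_add_mul_self (by linarith : (-1:ℝ) ≤ t)
        hpos.le (by linarith : β₁ ≤ 1)
      have hlow : (2 ^ β₁ - 1) * (t * v ^ β₁) ≤ (s + v) ^ β₁ - v ^ β₁ := by
        rw [hsvpow]
        nlinarith [mul_le_mul_of_nonneg_left hch hvb.le]
      have hupp : (s + v) ^ β₁ - v ^ β₁ ≤ β₁ * (t * v ^ β₁) := by
        rw [hsvpow]
        nlinarith [mul_le_mul_of_nonneg_left hbern hvb.le]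
      rw [hEq, mul_assoc, mul_assoc, hT]
      exact sandwich hpos (mul_nonneg ht0.le hvb.le) hc3 hC3 hlow hupp
end

section
/- Let n ≥ 1 be an integer, j ∈ {1, …, n}, c ∈ ℝ, and let a, b, M : ℝ → [0, ∞] be measurable functions. Then ∫_{ℝ⁴} a(r₁) b(r₂) a(r₃) b(r₄) · M(r₁ − r₃)^{n−j} · M(r₂ − r₄)^{n−j} · M(r₁ − r₂ + c)^{j} · M(r₃ − r₄ + c)^{j} dr₁ dr₂ dr₃ dr₄ ≤ (∫_{ℝ²} a(u) a(v) M(u − v)^n du dv)^{1 − j/n} · (∫_{ℝ²} b(u) b(v) M(u − v)^n du dv)^{1 − j/n} · (∫_{ℝ²} a(u) b(v) M(u − v + c)^n du dv)^{2j/n}, where all integrals are Lebesgue integrals of nonnegative functions (possibly infinite). -/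
open MeasureTheory
open scoped ENNReal

/-!
With `α = 1 - j/n`, `β = j/n` and the kernels `F u v = a u a v M(u-v)^n`,
`G u v = b u b v M(u-v)^n`, `H u v = a u b v M(u-v+c)^n`, the integrand is
`F(r₁,r₃)^α H(r₁,r₂)^β G(r₂,r₄)^α H(r₃,r₄)^β`: a product of kernels along the four-cycle
`r₁ - r₂ - r₄ - r₃ - r₁`. Hölder's inequality with exponents `α + β = 1`, used once per variable,
bounds the integral over the path `r₃ - r₄` by `(∫F(r₁,·))^α (∫G(r₂,·))^α (∫∫H)^β`, and the same
estimate applied to the remaining path `r₁ - r₂` gives the claim.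
-/

open Function

namespace ENNReal

theorem pow_rpow_div_natCast (x : ℝ≥0∞) {j n : ℕ} (hjn : j ≤ n) :
    (x ^ n) ^ ((j : ℝ) / n) = x ^ j := by
  rcases n.eq_zero_or_pos with rfl | hn
  · obtain rfl : j = 0 := by omega
    simp
  rw [← rpow_natCast x n, ← rpow_mul, mul_div_cancel₀ _ (by positivity), rpow_natCast]

theorem pow_rpow_one_sub_div_natCast (x : ℝ≥0∞) {j n : ℕ} (hjn : j ≤ n) :
    (x ^ n) ^ (1 - (j : ℝ) / n) = x ^ (n - j) := by
  rcases n.eq_zero_or_pos with rfl | hn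
  · simp
  rw [← pow_rpow_div_natCast x (n.sub_le j), Nat.cast_sub hjn, sub_div, div_self (by positivity)]

end ENNReal

section Holder

variable {X Y : Type*} [MeasurableSpace X] [MeasurableSpace Y] {μ : Measure X} {ν : Measure Y}
  {α β : ℝ}

theorem lintegral_const_mul_rpow_mul_rpow_le (C : ℝ≥0∞) {f g : X → ℝ≥0∞}
    (hf : AEMeasurable f μ) (hg : AEMeasurable g μ) (hα : 0 ≤ α) (hβ : 0 ≤ β) (hαβ : α + β = 1) :
    ∫⁻ x, C * (f x ^ α * g x ^ β) ∂μ ≤ C * ((∫⁻ x, f x ∂μ) ^ α * (∫⁻ x, g x ∂μ) ^ β) := by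
  rw [lintegral_const_mul'' C ((hf.pow_const α).fun_mul (hg.pow_const β))]
  gcongr
  exact ENNReal.lintegral_mul_norm_pow_le hf hg hα hβ hαβ

theorem lintegral_lintegral_const_mul_rpow_le [SFinite ν] (C : ℝ≥0∞) {f : X → ℝ≥0∞}
    {g : Y → ℝ≥0∞} {K : X → Y → ℝ≥0∞} (hf : AEMeasurable f μ) (hg : AEMeasurable g ν)
    (hK : Measurable (uncurry K)) (hα : 0 ≤ α) (hβ : 0 ≤ β) (hαβ : α + β = 1) :
    ∫⁻ x, ∫⁻ y, C * (f x ^ α * g y ^ α * K x y ^ β) ∂ν ∂μ ≤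
      C * ((∫⁻ x, f x ∂μ) ^ α * (∫⁻ y, g y ∂ν) ^ α * (∫⁻ x, ∫⁻ y, K x y ∂ν ∂μ) ^ β) :=
  calc ∫⁻ x, ∫⁻ y, C * (f x ^ α * g y ^ α * K x y ^ β) ∂ν ∂μ
      = ∫⁻ x, ∫⁻ y, C * f x ^ α * (g y ^ α * K x y ^ β) ∂ν ∂μ := by simp only [mul_assoc]
    _ ≤ ∫⁻ x, C * f x ^ α * ((∫⁻ y, g y ∂ν) ^ α * (∫⁻ y, K x y ∂ν) ^ β) ∂μ :=
        lintegral_mono fun x => lintegral_const_mul_rpow_mul_rpow_le _ hg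
          hK.of_uncurry_left.aemeasurable hα hβ hαβ
    _ = ∫⁻ x, C * (∫⁻ y, g y ∂ν) ^ α * (f x ^ α * (∫⁻ y, K x y ∂ν) ^ β) ∂μ := by
        congr! 2 with x; ring
    _ ≤ C * (∫⁻ y, g y ∂ν) ^ α * ((∫⁻ x, f x ∂μ) ^ α * (∫⁻ x, ∫⁻ y, K x y ∂ν ∂μ) ^ β) :=
        lintegral_const_mul_rpow_mul_rpow_le _ hf hK.lintegral_prod_right.aemeasurable hα hβ hαβ
    _ = C * ((∫⁻ x, f x ∂μ) ^ α * (∫⁻ y, g y ∂ν) ^ α * (∫⁻ x, ∫⁻ y, K x y ∂ν ∂μ) ^ β) := by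
        ring

theorem lintegral_four_cycle_rpow_le [SFinite μ] [SFinite ν] {F : X → X → ℝ≥0∞}
    {G : Y → Y → ℝ≥0∞} {H : X → Y → ℝ≥0∞} (hF : Measurable (uncurry F))
    (hG : Measurable (uncurry G)) (hH : Measurable (uncurry H)) (hα : 0 ≤ α) (hβ : 0 ≤ β)
    (hαβ : α + β = 1) :
    ∫⁻ x, ∫⁻ y, ∫⁻ z, ∫⁻ w, F x z ^ α * H x y ^ β * (G y w ^ α * H z w ^ β) ∂ν ∂μ ∂ν ∂μ ≤
      (∫⁻ x, ∫⁻ z, F x z ∂μ ∂μ) ^ α * (∫⁻ y, ∫⁻ w, G y w ∂ν ∂ν) ^ α *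
        (∫⁻ x, ∫⁻ y, H x y ∂ν ∂μ) ^ (2 * β) := by
  set I := ∫⁻ x, ∫⁻ y, H x y ∂ν ∂μ
  calc ∫⁻ x, ∫⁻ y, ∫⁻ z, ∫⁻ w, F x z ^ α * H x y ^ β * (G y w ^ α * H z w ^ β) ∂ν ∂μ ∂ν ∂μ
      = ∫⁻ x, ∫⁻ y, ∫⁻ z, ∫⁻ w, H x y ^ β * (F x z ^ α * G y w ^ α * H z w ^ β) ∂ν ∂μ ∂ν ∂μ := by
        congr! 8; ring
    _ ≤ ∫⁻ x, ∫⁻ y,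
          H x y ^ β * ((∫⁻ z, F x z ∂μ) ^ α * (∫⁻ w, G y w ∂ν) ^ α * I ^ β) ∂ν ∂μ :=
        lintegral_mono fun x => lintegral_mono fun y =>
          lintegral_lintegral_const_mul_rpow_le _ hF.of_uncurry_left.aemeasurable
            hG.of_uncurry_left.aemeasurable hH hα hβ hαβ
    _ = ∫⁻ x, ∫⁻ y,
          I ^ β * ((∫⁻ z, F x z ∂μ) ^ α * (∫⁻ w, G y w ∂ν) ^ α * H x y ^ β) ∂ν ∂μ := by
        congr! 4; ring
    _ ≤ I ^ β * ((∫⁻ x, ∫⁻ z, F x z ∂μ ∂μ) ^ α * (∫⁻ y, ∫⁻ w, G y w ∂ν ∂ν) ^ α * I ^ β) :=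
        lintegral_lintegral_const_mul_rpow_le _ hF.lintegral_prod_right.aemeasurable
          hG.lintegral_prod_right.aemeasurable hH hα hβ hαβ
    _ = (∫⁻ x, ∫⁻ z, F x z ∂μ ∂μ) ^ α * (∫⁻ y, ∫⁻ w, G y w ∂ν ∂ν) ^ α * I ^ (2 * β) := by
        rw [two_mul, ENNReal.rpow_add_of_nonneg _ _ hβ hβ]; ring

end Holder

theorem quadruple_integral_holder_bound_general
    (n j : ℕ) (hjn : j ≤ n) (c : ℝ)
    (a b M : ℝ → ℝ≥0∞) (ha : Measurable a) (hb : Measurable b) (hM : Measurable M) :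
    (∫⁻ r₁ : ℝ, ∫⁻ r₂ : ℝ, ∫⁻ r₃ : ℝ, ∫⁻ r₄ : ℝ,
        a r₁ * b r₂ * a r₃ * b r₄ * M (r₁ - r₃) ^ (n - j) * M (r₂ - r₄) ^ (n - j) *
          M (r₁ - r₂ + c) ^ j * M (r₃ - r₄ + c) ^ j) ≤
      (∫⁻ u : ℝ, ∫⁻ v : ℝ, a u * a v * M (u - v) ^ n) ^ (1 - (j : ℝ) / (n : ℝ)) *
        (∫⁻ u : ℝ, ∫⁻ v : ℝ, b u * b v * M (u - v) ^ n) ^ (1 - (j : ℝ) / (n : ℝ)) *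
        (∫⁻ u : ℝ, ∫⁻ v : ℝ, a u * b v * M (u - v + c) ^ n) ^ (2 * (j : ℝ) / (n : ℝ)) := by
  have hβ : 0 ≤ (j : ℝ) / n := by positivity
  have hα : 0 ≤ 1 - (j : ℝ) / n :=
    sub_nonneg.mpr (div_le_one_of_le₀ (by exact_mod_cast hjn) n.cast_nonneg)
  have hαβ : 1 - (j : ℝ) / n + j / n = 1 := sub_add_cancel 1 _
  have split (x : ℝ≥0∞) : x = x ^ (1 - (j : ℝ) / n) * x ^ ((j : ℝ) / n) := by
    rw [← ENNReal.rpow_add_of_nonneg _ _ hα hβ, hαβ, ENNReal.rpow_one]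
  have cycle (r₁ r₂ r₃ r₄ : ℝ) :
      a r₁ * b r₂ * a r₃ * b r₄ * M (r₁ - r₃) ^ (n - j) * M (r₂ - r₄) ^ (n - j) *
          M (r₁ - r₂ + c) ^ j * M (r₃ - r₄ + c) ^ j =
        (a r₁ * a r₃ * M (r₁ - r₃) ^ n) ^ (1 - (j : ℝ) / n) *
          (a r₁ * b r₂ * M (r₁ - r₂ + c) ^ n) ^ ((j : ℝ) / n) *
          ((b r₂ * b r₄ * M (r₂ - r₄) ^ n) ^ (1 - (j : ℝ) / n) *
            (a r₃ * b r₄ * M (r₃ - r₄ + c) ^ n) ^ ((j : ℝ) / n)) := by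
    simp only [ENNReal.mul_rpow_of_nonneg _ _ hα, ENNReal.mul_rpow_of_nonneg _ _ hβ,
      ENNReal.pow_rpow_div_natCast _ hjn, ENNReal.pow_rpow_one_sub_div_natCast _ hjn]
    conv_lhs => rw [split (a r₁), split (b r₂), split (a r₃), split (b r₄)]
    ring
  simp only [cycle, mul_div_assoc]
  exact lintegral_four_cycle_rpow_le (by fun_prop) (by fun_prop) (by fun_prop) hα hβ hαβ

/-- Hölder-type estimate: for `1 ≤ j ≤ n`, `c ∈ ℝ`, and measurable `a, b, M : ℝ → [0,∞]`,
`∫_{ℝ⁴} a(r₁)b(r₂)a(r₃)b(r₄) M(r₁−r₃)^{n−j} M(r₂−r₄)^{n−j} M(r₁−r₂+c)^j M(r₃−r₄+c)^j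
≤ (∫∫ a a M^n)^{1−j/n} (∫∫ b b M^n)^{1−j/n} (∫∫ a b M(·+c)^n)^{2j/n}`. -/
theorem quadruple_integral_holder_bound
    (n j : ℕ) (hn : 1 ≤ n) (hj : 1 ≤ j) (hjn : j ≤ n) (c : ℝ)
    (a b M : ℝ → ℝ≥0∞) (ha : Measurable a) (hb : Measurable b) (hM : Measurable M) :
    (∫⁻ r₁ : ℝ, ∫⁻ r₂ : ℝ, ∫⁻ r₃ : ℝ, ∫⁻ r₄ : ℝ,
        a r₁ * b r₂ * a r₃ * b r₄ * M (r₁ - r₃) ^ (n - j) * M (r₂ - r₄) ^ (n - j) *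
          M (r₁ - r₂ + c) ^ j * M (r₃ - r₄ + c) ^ j) ≤
      (∫⁻ u : ℝ, ∫⁻ v : ℝ, a u * a v * M (u - v) ^ n) ^ (1 - (j : ℝ) / (n : ℝ)) *
        (∫⁻ u : ℝ, ∫⁻ v : ℝ, b u * b v * M (u - v) ^ n) ^ (1 - (j : ℝ) / (n : ℝ)) *
        (∫⁻ u : ℝ, ∫⁻ v : ℝ, a u * b v * M (u - v + c) ^ n) ^ (2 * (j : ℝ) / (n : ℝ)) :=
  quadruple_integral_holder_bound_general n j hjn c a b M ha hb hM
end
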